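/- arXiv:1305.6954 — 8 statements merged into one kernel-verified Lean document; each statement's English description precedes it below -/
import Mathlib

section
/- Let Φ ∈ ℝ^{m×N} satisfy the Restricted Isometry Property with constant δ_k for sparsity k. Let Γ, Γ' ⊆ {1,…,N} be disjoint sets with |Γ ∪ Γ'| ≤ k, and let u ∈ ℝ^Γ. Then ‖Φ_{Γ'}* Φ_Γ u‖₂ ≤ δ_k ‖u‖₂. -/
open scoped BigOperators
open Matrix

/-! The off-diagonal block `Φ_{Γ'}* Φ_Γ` is controlled by polarization: for disjointly supported
`a, b` the vectors `a ± b` are `k`-sparse with `‖a ± b‖² = ‖a‖² + ‖b‖²`, so the RIP bounds on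
`‖Φ(a ± b)‖²` give `⟪Φa, Φb⟫ ≤ δ ‖a‖ ‖b‖`. Taking `a` the extension of `u` by zero and `b` that
of `w = Φ_{Γ'}* Φ_Γ u` yields `‖w‖² = ⟪Φ_Γ u, Φ_{Γ'} w⟫ ≤ δ ‖u‖ ‖w‖`. -/

/-- The Euclidean (ℓ²) norm of a finitely-indexed real vector. -/
noncomputable def l2 {ι : Type*} [Fintype ι] (x : ι → ℝ) : ℝ :=
  Real.sqrt (∑ i, x i ^ 2)

/-- The supremum (ℓ∞) norm of a finitely-indexed real vector. -/
noncomputable def linf {ι : Type*} [Fintype ι] (x : ι → ℝ) : ℝ :=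
  ⨆ i, |x i|

/-- The Euclidean inner product. -/
def dot {ι : Type*} [Fintype ι] (x y : ι → ℝ) : ℝ := ∑ i, x i * y i

/-- A vector is `k`-sparse if it has at most `k` nonzero entries. -/
def Sparse {N : ℕ} (k : ℕ) (x : Fin N → ℝ) : Prop :=
  ∃ Γ : Finset (Fin N), Γ.card ≤ k ∧ ∀ i ∉ Γ, x i = 0

/-- `Φ` satisfies the Restricted Isometry Property with constant `δ ∈ (0,1)` for sparsity `k`. -/
def RIP {m N : ℕ} (Φ : Matrix (Fin m) (Fin N) ℝ) (k : ℕ) (δ : ℝ) : Prop :=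
  0 < δ ∧ δ < 1 ∧
    ∀ x : Fin N → ℝ, Sparse k x →
      (1 - δ) * l2 x ^ 2 ≤ l2 (Φ.mulVec x) ^ 2 ∧
      l2 (Φ.mulVec x) ^ 2 ≤ (1 + δ) * l2 x ^ 2

/-- The column submatrix `Φ_Γ` of `Φ` formed by the columns indexed by `Γ`. -/
def colSub {m N : ℕ} (Φ : Matrix (Fin m) (Fin N) ℝ) (Γ : Finset (Fin N)) :
    Matrix (Fin m) (↥Γ) ℝ := fun i j => Φ i j.1

lemma l2_nonneg {ι : Type*} [Fintype ι] (x : ι → ℝ) : 0 ≤ l2 x :=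
  Real.sqrt_nonneg _

lemma sq_l2 {ι : Type*} [Fintype ι] (x : ι → ℝ) : l2 x ^ 2 = x ⬝ᵥ x := by
  rw [l2, Real.sq_sqrt (Finset.sum_nonneg fun i _ => sq_nonneg (x i))]
  simp only [dotProduct, sq]

lemma eq_zero_of_l2_eq_zero {ι : Type*} [Fintype ι] {x : ι → ℝ} (hx : l2 x = 0) : x = 0 :=
  dotProduct_self_eq_zero.1 (by rw [← sq_l2, hx, sq, zero_mul])

section ExtendByZero

variable {ι : Type*} [DecidableEq ι] {Γ : Finset ι}

def extendByZero (Γ : Finset ι) (u : Γ → ℝ) : ι → ℝ :=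
  fun i => if h : i ∈ Γ then u ⟨i, h⟩ else 0

lemma extendByZero_coe (u : Γ → ℝ) (j : Γ) : extendByZero Γ u j = u j := by
  simp [extendByZero, j.2]

lemma extendByZero_of_notMem (u : Γ → ℝ) {i : ι} (hi : i ∉ Γ) : extendByZero Γ u i = 0 :=
  dif_neg hi

lemma dotProduct_extendByZero [Fintype ι] (f : ι → ℝ) (u : Γ → ℝ) :
    f ⬝ᵥ extendByZero Γ u = (fun j : Γ => f j) ⬝ᵥ u := by
  calc f ⬝ᵥ extendByZero Γ u = ∑ i ∈ Γ, f i * extendByZero Γ u i :=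
        (Finset.sum_subset Γ.subset_univ fun i _ hi => by
          rw [extendByZero_of_notMem u hi, mul_zero]).symm
    _ = ∑ j : Γ, f j * extendByZero Γ u j := (Finset.sum_coe_sort Γ _).symm
    _ = (fun j : Γ => f j) ⬝ᵥ u := by simp only [extendByZero_coe, dotProduct]

lemma l2_extendByZero [Fintype ι] (u : Γ → ℝ) : l2 (extendByZero Γ u) = l2 u := by
  rw [← Real.sqrt_sq (l2_nonneg _), sq_l2, dotProduct_extendByZero]
  simp only [extendByZero_coe]
  rw [← sq_l2, Real.sqrt_sq (l2_nonneg u)]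

lemma colSub_eq_submatrix {m N : ℕ} (Φ : Matrix (Fin m) (Fin N) ℝ) (Γ : Finset (Fin N)) :
    colSub Φ Γ = Φ.submatrix id Subtype.val :=
  rfl

lemma mulVec_extendByZero [Fintype ι] {m : Type*} (A : Matrix m ι ℝ) (u : Γ → ℝ) :
    A *ᵥ extendByZero Γ u = A.submatrix id Subtype.val *ᵥ u := by
  ext i
  exact dotProduct_extendByZero (A i) u

end ExtendByZero

section RIP

variable {m N k : ℕ} {Φ : Matrix (Fin m) (Fin N) ℝ} {δ : ℝ}

lemma RIP.two_mul_dotProduct_mulVec_le (hΦ : RIP Φ k δ) {a b : Fin N → ℝ} (hab : a ⬝ᵥ b = 0)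
    (hadd : Sparse k (a + b)) (hsub : Sparse k (a - b)) :
    2 * (Φ *ᵥ a ⬝ᵥ Φ *ᵥ b) ≤ δ * (a ⬝ᵥ a + b ⬝ᵥ b) := by
  have hupper := (hΦ.2.2 _ hadd).2
  have hlower := (hΦ.2.2 _ hsub).1
  simp only [sq_l2, mulVec_add, mulVec_sub, add_dotProduct, dotProduct_add, sub_dotProduct,
    dotProduct_sub, dotProduct_comm b a, dotProduct_comm (Φ *ᵥ b), hab] at hupper hlower
  linarith

lemma sparse_add_of_support {Γ Γ' : Finset (Fin N)} (hcard : (Γ ∪ Γ').card ≤ k)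
    {a b : Fin N → ℝ} (ha : ∀ i ∉ Γ, a i = 0) (hb : ∀ i ∉ Γ', b i = 0) : Sparse k (a + b) :=
  ⟨Γ ∪ Γ', hcard, fun i hi => by
    rw [Finset.mem_union, not_or] at hi
    rw [Pi.add_apply, ha i hi.1, hb i hi.2, add_zero]⟩

lemma dotProduct_eq_zero_of_disjoint {Γ Γ' : Finset (Fin N)} (hdisj : Disjoint Γ Γ')
    {a b : Fin N → ℝ} (ha : ∀ i ∉ Γ, a i = 0) (hb : ∀ i ∉ Γ', b i = 0) : a ⬝ᵥ b = 0 :=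
  Finset.sum_eq_zero fun i _ => by
    by_cases hi : i ∈ Γ
    · rw [hb i (Finset.disjoint_left.1 hdisj hi), mul_zero]
    · rw [ha i hi, zero_mul]

/-- Applied to `‖b‖ • a` and `‖a‖ • b`, the polarization bound `2⟪Φa, Φb⟫ ≤ δ (‖a‖² + ‖b‖²)`
becomes homogeneous. -/
lemma RIP.dotProduct_mulVec_le_of_disjoint (hΦ : RIP Φ k δ) {Γ Γ' : Finset (Fin N)}
    (hdisj : Disjoint Γ Γ') (hcard : (Γ ∪ Γ').card ≤ k) {a b : Fin N → ℝ}
    (ha : ∀ i ∉ Γ, a i = 0) (hb : ∀ i ∉ Γ', b i = 0) :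
    Φ *ᵥ a ⬝ᵥ Φ *ᵥ b ≤ δ * (l2 a * l2 b) := by
  have ha' : ∀ i ∉ Γ, (l2 b • a) i = 0 := fun i hi => by simp [ha i hi]
  have hb' : ∀ i ∉ Γ', (l2 a • b) i = 0 := fun i hi => by simp [hb i hi]
  have hnegb : ∀ i ∉ Γ', (-(l2 a • b)) i = 0 := fun i hi => by simp [hb' i hi]
  have h := hΦ.two_mul_dotProduct_mulVec_le (dotProduct_eq_zero_of_disjoint hdisj ha' hb')
    (sparse_add_of_support hcard ha' hb')
    (by simpa only [sub_eq_add_neg] using sparse_add_of_support hcard ha' hnegb)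
  simp only [mulVec_smul, smul_dotProduct, dotProduct_smul, smul_eq_mul, ← sq_l2] at h
  rcases (mul_nonneg (l2_nonneg a) (l2_nonneg b)).eq_or_lt with h0 | hpos
  · rcases mul_eq_zero.1 h0.symm with ha0 | hb0
    · rw [ha0, zero_mul, mul_zero, eq_zero_of_l2_eq_zero ha0, mulVec_zero, zero_dotProduct]
    · rw [hb0, mul_zero, mul_zero, eq_zero_of_l2_eq_zero hb0, mulVec_zero, dotProduct_zero]
  · exact le_of_mul_le_mul_left (by linarith) hpos

end RIP

/-- If `Φ` satisfies RIP with constant `δ` for sparsity `k`, `Γ` and `Γ'` are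
disjoint with `|Γ ∪ Γ'| ≤ k`, and `u ∈ ℝ^Γ`, then `‖Φ_{Γ'}* Φ_Γ u‖₂ ≤ δ‖u‖₂`. -/
theorem stmt3 {m N : ℕ} (Φ : Matrix (Fin m) (Fin N) ℝ) (k : ℕ) (δ : ℝ)
    (hRIP : RIP Φ k δ) (Γ Γ' : Finset (Fin N)) (hdisj : Disjoint Γ Γ')
    (hcard : (Γ ∪ Γ').card ≤ k) (u : ↥Γ → ℝ) :
    l2 ((colSub Φ Γ')ᵀ.mulVec ((colSub Φ Γ).mulVec u)) ≤ δ * l2 u := by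
  set w := (colSub Φ Γ')ᵀ *ᵥ (colSub Φ Γ *ᵥ u)
  have hsq : l2 w ^ 2 ≤ δ * (l2 w * l2 u) := by
    calc l2 w ^ 2 = colSub Φ Γ *ᵥ u ⬝ᵥ colSub Φ Γ' *ᵥ w := by
          rw [sq_l2, dotProduct_mulVec, vecMul_transpose, dotProduct_comm]
      _ = Φ *ᵥ extendByZero Γ u ⬝ᵥ Φ *ᵥ extendByZero Γ' w := by
          rw [mulVec_extendByZero, mulVec_extendByZero, colSub_eq_submatrix, colSub_eq_submatrix]
      _ ≤ δ * (l2 (extendByZero Γ u) * l2 (extendByZero Γ' w)) :=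
          hRIP.dotProduct_mulVec_le_of_disjoint hdisj hcard
            (fun _ => extendByZero_of_notMem u) (fun _ => extendByZero_of_notMem w)
      _ = δ * (l2 w * l2 u) := by rw [l2_extendByZero, l2_extendByZero, mul_comm (l2 u)]
  rcases (l2_nonneg w).eq_or_lt with h0 | hpos
  · rw [← h0]
    exact mul_nonneg hRIP.1.le (l2_nonneg u)
  · exact le_of_mul_le_mul_left (by rwa [sq, mul_left_comm] at hsq) hpos
end

section
/- Let Φ ∈ ℝ^{m×N} satisfy the Restricted Isometry Property with constant δ_k for sparsity k, and let Γ ⊆ {1,…,N} with |Γ| ≤ k. Then for every r ∈ ℝ^m lying in the column span of Φ_Γ (i.e., r = Φ_Γ w for some w ∈ ℝ^Γ), one has ‖Φ_Γ* r‖₂ ≥ (1−δ_k)^{1/2} ‖r‖₂. -/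
open scoped BigOperators
open Matrix

/-- If `Φ` satisfies RIP with constant `δ` for sparsity `k`, `|Γ| ≤ k`, and
`r ∈ ℝ^m` lies in the column span of `Φ_Γ`, then `‖Φ_Γ* r‖₂ ≥ √(1−δ) ‖r‖₂`. -/
theorem stmt4 {m N : ℕ} (Φ : Matrix (Fin m) (Fin N) ℝ) (k : ℕ) (δ : ℝ)
    (hRIP : RIP Φ k δ) (Γ : Finset (Fin N)) (hΓ : Γ.card ≤ k)
    (r : Fin m → ℝ) (hr : ∃ w : ↥Γ → ℝ, r = (colSub Φ Γ).mulVec w) :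
    l2 ((colSub Φ Γ)ᵀ.mulVec r) ≥ Real.sqrt (1 - δ) * l2 r := by
  obtain ⟨w, hw⟩ := hr
  obtain ⟨hδ0, hδ1, hrip⟩ := hRIP
  set x : Fin N → ℝ := fun i => if h : i ∈ Γ then w ⟨i, h⟩ else 0 with hx
  have hsp : Sparse k x := ⟨Γ, hΓ, fun i hi => by simp [hx, hi]⟩
  have hmul : Φ.mulVec x = (colSub Φ Γ).mulVec w := by
    funext i
    simp only [Matrix.mulVec, dotProduct]
    have h1 : ∑ j : Fin N, Φ i j * x j = ∑ j ∈ Γ, Φ i j * x j :=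
      (Finset.sum_subset (Finset.subset_univ Γ) (fun j _ hj => by simp [hx, hj])).symm
    have h2 : ∑ j ∈ Γ, Φ i j * x j = ∑ j ∈ Γ.attach, Φ i j.1 * x j.1 :=
      (Finset.sum_attach Γ _).symm
    rw [h1, h2]
    refine Finset.sum_congr rfl fun j _ => ?_
    simp [hx, j.2, colSub]
  have hl2x : l2 x = l2 w := by
    unfold l2
    congr 1
    have h1 : ∑ j : Fin N, x j ^ 2 = ∑ j ∈ Γ, x j ^ 2 :=
      (Finset.sum_subset (Finset.subset_univ Γ) (fun j _ hj => by simp [hx, hj])).symm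
    have h2 : ∑ j ∈ Γ, x j ^ 2 = ∑ j ∈ Γ.attach, x j.1 ^ 2 :=
      (Finset.sum_attach Γ _).symm
    rw [h1, h2]
    refine Finset.sum_congr rfl fun j _ => ?_
    simp [hx, j.2]
  have hripx := (hrip x hsp).1
  rw [hmul, hl2x, ← hw] at hripx
  have hl2r : 0 ≤ l2 r := Real.sqrt_nonneg _
  have hl2w : 0 ≤ l2 w := Real.sqrt_nonneg _
  set v := l2 ((colSub Φ Γ)ᵀ.mulVec r) with hv
  have hl2v : 0 ≤ v := Real.sqrt_nonneg _
  have hdot : ∑ j, ((colSub Φ Γ)ᵀ.mulVec r) j * w j = l2 r ^ 2 := by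
    simp only [Matrix.mulVec, dotProduct, Matrix.transpose_apply]
    calc ∑ j, (∑ i, colSub Φ Γ i j * r i) * w j
        = ∑ j, ∑ i, colSub Φ Γ i j * r i * w j := by
          refine Finset.sum_congr rfl fun j _ => ?_; rw [Finset.sum_mul]
      _ = ∑ i, ∑ j, colSub Φ Γ i j * r i * w j := Finset.sum_comm
      _ = ∑ i, r i * ((colSub Φ Γ).mulVec w i) := by
          refine Finset.sum_congr rfl fun i _ => ?_
          simp only [Matrix.mulVec, dotProduct, Finset.mul_sum]
          exact Finset.sum_congr rfl fun j _ => by ring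
      _ = ∑ i, r i ^ 2 := by rw [← hw]; exact Finset.sum_congr rfl fun i _ => by ring
      _ = l2 r ^ 2 := by
          rw [l2, Real.sq_sqrt]
          exact Finset.sum_nonneg fun i _ => sq_nonneg _
  have hcs := Finset.sum_mul_sq_le_sq_mul_sq Finset.univ
    (fun j => ((colSub Φ Γ)ᵀ.mulVec r) j) w
  rw [hdot] at hcs
  have hvsq : ∑ j, ((colSub Φ Γ)ᵀ.mulVec r) j ^ 2 = v ^ 2 := by
    rw [hv, l2, Real.sq_sqrt]; exact Finset.sum_nonneg fun i _ => sq_nonneg _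
  have hwsq : ∑ j, w j ^ 2 = l2 w ^ 2 := by
    rw [l2, Real.sq_sqrt]; exact Finset.sum_nonneg fun i _ => sq_nonneg _
  rw [hvsq, hwsq] at hcs
  set s := Real.sqrt (1 - δ) with hs
  have hs0 : 0 ≤ s := Real.sqrt_nonneg _
  have hssq : s ^ 2 = 1 - δ := Real.sq_sqrt (by linarith)
  have h1 : s * l2 w ≤ l2 r := by
    nlinarith [sq_nonneg (s * l2 w - l2 r), sq_nonneg (s * l2 w + l2 r)]
  rcases eq_or_lt_of_le hl2r with h | h
  · rw [ge_iff_le, ← h, mul_zero]; exact hl2v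
  · have h1sq : s ^ 2 * l2 w ^ 2 ≤ l2 r ^ 2 := by
      nlinarith [mul_le_mul h1 h1 (mul_nonneg hs0 hl2w) hl2r]
    have hA : s ^ 2 * (l2 r ^ 2) ^ 2 ≤ s ^ 2 * (v ^ 2 * l2 w ^ 2) :=
      mul_le_mul_of_nonneg_left hcs (sq_nonneg s)
    have hB : v ^ 2 * (s ^ 2 * l2 w ^ 2) ≤ v ^ 2 * l2 r ^ 2 :=
      mul_le_mul_of_nonneg_left h1sq (sq_nonneg v)
    have hC : (s * l2 r) ^ 2 * l2 r ^ 2 ≤ v ^ 2 * l2 r ^ 2 := by nlinarith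
    have hD : (s * l2 r) ^ 2 ≤ v ^ 2 :=
      le_of_mul_le_mul_right hC (by positivity)
    rw [ge_iff_le]
    nlinarith [mul_nonneg hs0 hl2r]
end

section
/- Let Φ ∈ ℝ^{m×N} satisfy the Restricted Isometry Property with constants δ_k and δ_{k+1} (for sparsities k and k+1 respectively), let Γ♯ ⊆ {1,…,N} with |Γ♯| ≤ k, and let r ∈ ℝ^m be a nonzero vector in the column span of Φ_{Γ♯}. Then ‖Φ_{Γ♯ᶜ}* r‖_∞ ≤ (√k · δ_{k+1}/(1−δ_k)) · ‖Φ_{Γ♯}* r‖_∞, where Γ♯ᶜ = {1,…,N} \ Γ♯. Consequently, if α ∈ (0,1] satisfies α > √k · δ_{k+1}/(1−δ_k), then the stagewise weak selection set I(α) = {i ∈ {1,…,N} : |⟨φ_i, r⟩| ≥ α‖Φ* r‖_∞} is contained in Γ♯, where φ_i is the i-th column of Φ. -/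
open scoped BigOperators
open Matrix

lemma l2_sq {ι : Type*} [Fintype ι] (x : ι → ℝ) : l2 x ^ 2 = ∑ i, x i ^ 2 :=
  Real.sq_sqrt (Finset.sum_nonneg fun i _ => sq_nonneg _)

lemma abs_le_linf {ι : Type*} [Fintype ι] (x : ι → ℝ) (i : ι) : |x i| ≤ linf x :=
  le_ciSup (f := fun i => |x i|) (Set.Finite.bddAbove (Set.finite_range _)) i

lemma linf_nonneg {ι : Type*} [Fintype ι] (x : ι → ℝ) : 0 ≤ linf x := by
  by_cases h : Nonempty ι
  · obtain ⟨i⟩ := h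
    exact le_trans (abs_nonneg (x i)) (abs_le_linf x i)
  · rw [not_nonempty_iff] at h
    simp [linf, Real.iSup_of_isEmpty]

lemma linf_le {ι : Type*} [Fintype ι] {x : ι → ℝ} {c : ℝ} (hc : 0 ≤ c)
    (h : ∀ i, |x i| ≤ c) : linf x ≤ c := by
  by_cases hι : Nonempty ι
  · exact ciSup_le h
  · rw [not_nonempty_iff] at hι
    simpa [linf, Real.iSup_of_isEmpty] using hc

lemma dot_mulVec' {m N : ℕ} (Φ : Matrix (Fin m) (Fin N) ℝ) (x : Fin N → ℝ) (r : Fin m → ℝ) :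
    dot (Φ.mulVec x) r = ∑ i, x i * Φᵀ.mulVec r i := by
  simp only [dot, Matrix.mulVec, dotProduct, Matrix.transpose_apply,
    Finset.sum_mul, Finset.mul_sum]
  rw [Finset.sum_comm]
  refine Finset.sum_congr rfl fun i _ => Finset.sum_congr rfl fun j _ => by ring

lemma l2_add_sq {ι : Type*} [Fintype ι] (u v : ι → ℝ) :
    l2 (u + v) ^ 2 = l2 u ^ 2 + 2 * dot u v + l2 v ^ 2 := by
  simp only [l2_sq, dot, Pi.add_apply]
  rw [Finset.mul_sum, ← Finset.sum_add_distrib, ← Finset.sum_add_distrib]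
  exact Finset.sum_congr rfl fun i _ => by ring

lemma l2_sub_sq {ι : Type*} [Fintype ι] (u v : ι → ℝ) :
    l2 (u - v) ^ 2 = l2 u ^ 2 - 2 * dot u v + l2 v ^ 2 := by
  simp only [l2_sq, dot, Pi.sub_apply]
  rw [Finset.mul_sum, ← Finset.sum_sub_distrib, ← Finset.sum_add_distrib]
  exact Finset.sum_congr rfl fun i _ => by ring

lemma dot_self_eq_l2_sq {ι : Type*} [Fintype ι] (x : ι → ℝ) : dot x x = l2 x ^ 2 := by
  simp only [l2_sq, dot]
  exact Finset.sum_congr rfl fun i _ => (sq (x i)).symm ▸ by ring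

lemma polar {m N : ℕ} {Φ : Matrix (Fin m) (Fin N) ℝ} {n : ℕ} {δ : ℝ}
    (h : RIP Φ n δ) (u v : Fin N → ℝ) (huv : dot u v = 0)
    (h1 : Sparse n (u + v)) (h2 : Sparse n (u - v)) :
    |dot (Φ.mulVec u) (Φ.mulVec v)| ≤ δ / 2 * (l2 u ^ 2 + l2 v ^ 2) := by
  obtain ⟨hδ0, hδ1, hR⟩ := h
  have e1 : l2 (u + v) ^ 2 = l2 u ^ 2 + l2 v ^ 2 := by
    rw [l2_add_sq, huv]; ring
  have e2 : l2 (u - v) ^ 2 = l2 u ^ 2 + l2 v ^ 2 := by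
    rw [l2_sub_sq, huv]; ring
  have m1 : l2 (Φ.mulVec (u + v)) ^ 2
      = l2 (Φ.mulVec u) ^ 2 + 2 * dot (Φ.mulVec u) (Φ.mulVec v) + l2 (Φ.mulVec v) ^ 2 := by
    rw [Matrix.mulVec_add, l2_add_sq]
  have m2 : l2 (Φ.mulVec (u - v)) ^ 2
      = l2 (Φ.mulVec u) ^ 2 - 2 * dot (Φ.mulVec u) (Φ.mulVec v) + l2 (Φ.mulVec v) ^ 2 := by
    rw [Matrix.mulVec_sub, l2_sub_sq]
  have A1 := (hR _ h1).1
  have A2 := (hR _ h1).2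
  have B1 := (hR _ h2).1
  have B2 := (hR _ h2).2
  rw [e1, m1] at A1 A2
  rw [e2, m2] at B1 B2
  rw [abs_le]
  constructor <;> nlinarith [sq_nonneg (l2 u), sq_nonneg (l2 v)]

/-- support identification for the stagewise weak selection rule.
If `Φ` satisfies RIP with constants `δk` (sparsity `k`) and `δk1` (sparsity `k+1`),
`|Γ♯| ≤ k`, and `r ≠ 0` lies in the column span of `Φ_{Γ♯}`, then
`‖Φ_{Γ♯ᶜ}* r‖_∞ ≤ (√k·δk1/(1−δk))·‖Φ_{Γ♯}* r‖_∞`, and for every weakness parameter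
`α ∈ (0,1]` with `α > √k·δk1/(1−δk)` the stagewise weak selection set
`{i : |⟨φ_i, r⟩| ≥ α‖Φ* r‖_∞}` is contained in `Γ♯`. -/
theorem stmt5 {m N : ℕ} (Φ : Matrix (Fin m) (Fin N) ℝ) (k : ℕ) (δk δk1 : ℝ)
    (hRIPk : RIP Φ k δk) (hRIPk1 : RIP Φ (k + 1) δk1)
    (Γs : Finset (Fin N)) (hΓ : Γs.card ≤ k)
    (r : Fin m → ℝ) (hr0 : r ≠ 0)
    (hr : ∃ w : ↥Γs → ℝ, r = (colSub Φ Γs).mulVec w) :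
    linf ((colSub Φ Γsᶜ)ᵀ.mulVec r) ≤
      Real.sqrt k * δk1 / (1 - δk) * linf ((colSub Φ Γs)ᵀ.mulVec r) ∧
    ∀ α : ℝ, 0 < α → α ≤ 1 → Real.sqrt k * δk1 / (1 - δk) < α →
      ∀ i : Fin N, α * linf (Φᵀ.mulVec r) ≤ |dot (fun j => Φ j i) r| → i ∈ Γs := by
  obtain ⟨w, hw⟩ := hr
  obtain ⟨hδk0, hδk1lt, hRk⟩ := hRIPk
  obtain ⟨hδ10, hδ11, hR1⟩ := hRIPk1
  set x : Fin N → ℝ := fun i => if h : i ∈ Γs then w ⟨i, h⟩ else 0 with hxdef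
  -- r = Φ x
  have hrx : r = Φ.mulVec x := by
    rw [hw]
    funext j
    simp only [Matrix.mulVec, dotProduct, colSub]
    rw [← Finset.sum_subset (Finset.subset_univ Γs)
      (fun i _ hi => by simp [hxdef, dif_neg hi]),
      ← Finset.sum_attach Γs (fun i => Φ j i * x i), Finset.univ_eq_attach]
    refine Finset.sum_congr rfl fun i _ => ?_
    simp [hxdef, dif_pos i.2]
  -- basic positivity facts
  have hx_sparse : Sparse k x := ⟨Γs, hΓ, fun i hi => dif_neg hi⟩
  have hxne : x ≠ 0 := by
    intro h
    exact hr0 (by rw [hrx, h, Matrix.mulVec_zero])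
  have hl2x_pos : 0 < l2 x := by
    obtain ⟨i, hi⟩ := Function.ne_iff.mp hxne
    have : 0 < ∑ j, x j ^ 2 :=
      Finset.sum_pos' (fun j _ => sq_nonneg _)
        ⟨i, Finset.mem_univ i, (sq_nonneg (x i)).lt_of_ne' (pow_ne_zero 2 hi)⟩
    exact Real.sqrt_pos.mpr this
  have hΓne : Γs.Nonempty := by
    rcases Γs.eq_empty_or_nonempty with h | h
    · exfalso
      apply hxne
      funext i
      simp [hxdef, h]
    · exact h
  have hk1 : 1 ≤ k := le_trans (Finset.card_pos.mpr hΓne) hΓ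
  have hsk_pos : (0:ℝ) < Real.sqrt k := Real.sqrt_pos.mpr (by exact_mod_cast hk1)
  have h1δ : (0:ℝ) < 1 - δk := by linarith
  -- entry identities
  have hentS : ∀ j : ↥Γs, ((colSub Φ Γs)ᵀ.mulVec r) j = Φᵀ.mulVec r j.1 := by
    intro j
    simp [colSub, Matrix.mulVec, dotProduct]
  have hentC : ∀ j : ↥Γsᶜ, ((colSub Φ Γsᶜ)ᵀ.mulVec r) j = Φᵀ.mulVec r j.1 := by
    intro j
    simp [colSub, Matrix.mulVec, dotProduct]
  set L : ℝ := linf ((colSub Φ Γs)ᵀ.mulVec r) with hLdef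
  have hL_nonneg : 0 ≤ L := linf_nonneg _
  have hL_ub : ∀ i ∈ Γs, |Φᵀ.mulVec r i| ≤ L := by
    intro i hi
    have := abs_le_linf ((colSub Φ Γs)ᵀ.mulVec r) ⟨i, hi⟩
    rwa [hentS ⟨i, hi⟩] at this
  -- lower bound: (1 - δk) * l2 x ≤ √k * L
  have h_rr : dot r r = ∑ i, x i * Φᵀ.mulVec r i := by
    have := dot_mulVec' Φ x r
    rw [← hrx] at this
    exact this
  have h_rr_lb : (1 - δk) * l2 x ^ 2 ≤ dot r r := by
    rw [dot_self_eq_l2_sq, hrx]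
    exact (hRk x hx_sparse).1
  have h_l1 : ∑ i ∈ Γs, |x i| ≤ Real.sqrt k * l2 x := by
    have hcs := sq_sum_le_card_mul_sum_sq (s := Γs) (f := fun i => |x i|)
    have h2 : ∑ i ∈ Γs, |x i| ^ 2 = ∑ i ∈ Γs, x i ^ 2 := by
      exact Finset.sum_congr rfl fun i _ => sq_abs _
    rw [h2] at hcs
    have hsub : ∑ i ∈ Γs, x i ^ 2 ≤ ∑ i, x i ^ 2 :=
      Finset.sum_le_sum_of_subset_of_nonneg (Finset.subset_univ _)
        (fun i _ _ => sq_nonneg _)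
    have hnn : (0:ℝ) ≤ ∑ i ∈ Γs, |x i| :=
      Finset.sum_nonneg fun i _ => abs_nonneg _
    calc ∑ i ∈ Γs, |x i|
        = Real.sqrt ((∑ i ∈ Γs, |x i|) ^ 2) := (Real.sqrt_sq hnn).symm
      _ ≤ Real.sqrt ((k : ℝ) * ∑ i, x i ^ 2) := by
          apply Real.sqrt_le_sqrt
          calc (∑ i ∈ Γs, |x i|) ^ 2 ≤ (Γs.card : ℝ) * ∑ i ∈ Γs, x i ^ 2 := hcs
            _ ≤ (k : ℝ) * ∑ i, x i ^ 2 := by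
                apply mul_le_mul (by exact_mod_cast hΓ) hsub
                  (Finset.sum_nonneg fun i _ => sq_nonneg _) (Nat.cast_nonneg _)
      _ = Real.sqrt k * l2 x := by
          rw [Real.sqrt_mul (Nat.cast_nonneg _)]; rfl
  have h_rr_ub : dot r r ≤ Real.sqrt k * l2 x * L := by
    rw [h_rr]
    calc ∑ i, x i * Φᵀ.mulVec r i
        = ∑ i ∈ Γs, x i * Φᵀ.mulVec r i := by
          refine (Finset.sum_subset (Finset.subset_univ Γs) ?_).symm
          intro i _ hi
          simp [hxdef, dif_neg hi]
      _ ≤ ∑ i ∈ Γs, |x i| * L := by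
          refine Finset.sum_le_sum fun i hi => ?_
          calc x i * Φᵀ.mulVec r i ≤ |x i * Φᵀ.mulVec r i| := le_abs_self _
            _ = |x i| * |Φᵀ.mulVec r i| := abs_mul _ _
            _ ≤ |x i| * L := mul_le_mul_of_nonneg_left (hL_ub i hi) (abs_nonneg _)
      _ = (∑ i ∈ Γs, |x i|) * L := (Finset.sum_mul ..).symm
      _ ≤ Real.sqrt k * l2 x * L := mul_le_mul_of_nonneg_right h_l1 hL_nonneg
  have hkey : (1 - δk) * l2 x ≤ Real.sqrt k * L := by
    have h := le_trans h_rr_lb h_rr_ub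
    have := mul_le_mul_of_nonneg_right (le_refl (1:ℝ)) hl2x_pos.le
    nlinarith [hl2x_pos]
  have hL_pos : 0 < L := by nlinarith [hl2x_pos, hsk_pos]
  -- off-support bound
  have h_off : ∀ i ∉ Γs, |Φᵀ.mulVec r i| ≤ δk1 * l2 x := by
    intro i hi
    set v : Fin N → ℝ := Pi.single i (l2 x) with hvdef
    have hdotxv : dot x v = 0 := by
      simp only [dot, hvdef, Pi.single_apply, mul_ite, mul_zero]
      rw [Finset.sum_ite_eq' Finset.univ i (fun j => x j * l2 x)]
      simp [hxdef, dif_neg hi]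
    have hsupp : ∀ c : ℝ, ∀ j ∉ insert i Γs, x j + c * v j = 0 := by
      intro c j hj
      rw [Finset.mem_insert] at hj
      push_neg at hj
      simp [hxdef, dif_neg hj.2, hvdef, Pi.single_eq_of_ne hj.1]
    have hcard : (insert i Γs).card ≤ k + 1 := by
      calc (insert i Γs).card ≤ Γs.card + 1 := Finset.card_insert_le _ _
        _ ≤ k + 1 := by omega
    have hs1 : Sparse (k+1) (x + v) :=
      ⟨insert i Γs, hcard, fun j hj => by simpa using hsupp 1 j hj⟩
    have hs2 : Sparse (k+1) (x - v) :=
      ⟨insert i Γs, hcard, fun j hj => by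
        have := hsupp (-1) j hj
        simp only [Pi.sub_apply]
        linarith [this]⟩
    have hpol := polar ⟨hδ10, hδ11, hR1⟩ x v hdotxv hs1 hs2
    have hl2v : l2 v ^ 2 = l2 x ^ 2 := by
      have hv : ∀ j, v j ^ 2 = if j = i then l2 x ^ 2 else 0 := by
        intro j
        simp only [hvdef, Pi.single_apply]
        split <;> simp
      rw [l2_sq]
      simp_rw [hv]
      rw [Finset.sum_ite_eq' Finset.univ i (fun _ => l2 x ^ 2)]
      simp
    rw [hl2v] at hpol
    have hΦv : Φ.mulVec v = fun j => Φ j i * l2 x := Matrix.mulVec_single Φ i (l2 x)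
    have hdval : dot (Φ.mulVec x) (Φ.mulVec v) = l2 x * Φᵀ.mulVec r i := by
      rw [hΦv, ← hrx]
      simp only [dot, Matrix.mulVec, dotProduct, Matrix.transpose_apply,
        Finset.mul_sum]
      exact Finset.sum_congr rfl fun j _ => by ring
    rw [hdval] at hpol
    rw [abs_mul, abs_of_pos hl2x_pos] at hpol
    have : l2 x * |Φᵀ.mulVec r i| ≤ l2 x * (δk1 * l2 x) := by nlinarith
    exact le_of_mul_le_mul_left this hl2x_pos
  -- first conclusion
  have hC : Real.sqrt k * δk1 / (1 - δk) * L ≥ δk1 * l2 x := by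
    rw [ge_iff_le, div_mul_eq_mul_div, le_div_iff₀ h1δ]
    nlinarith [hδ10.le, hkey]
  have hfirst : linf ((colSub Φ Γsᶜ)ᵀ.mulVec r) ≤
      Real.sqrt k * δk1 / (1 - δk) * L := by
    apply linf_le
    · positivity
    · intro j
      rw [hentC j]
      have hj : (j : Fin N) ∉ Γs := by
        exact Finset.mem_compl.mp j.2
      exact le_trans (h_off j.1 hj) hC
  refine ⟨hfirst, ?_⟩
  intro α hα0 hα1 hαgt i hi
  by_contra hiΓ
  have hd : dot (fun j => Φ j i) r = Φᵀ.mulVec r i := by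
    simp [dot, Matrix.mulVec, dotProduct]
  rw [hd] at hi
  have hLlinf : L ≤ linf (Φᵀ.mulVec r) := by
    apply linf_le (linf_nonneg _)
    intro j
    rw [hentS j]
    exact abs_le_linf _ j.1
  have hlinf_pos : 0 < linf (Φᵀ.mulVec r) := lt_of_lt_of_le hL_pos hLlinf
  have hub : |Φᵀ.mulVec r i| ≤ Real.sqrt k * δk1 / (1 - δk) * L :=
    le_trans (h_off i hiΓ) hC
  have hc_nonneg : 0 ≤ Real.sqrt k * δk1 / (1 - δk) := by positivity
  have : Real.sqrt k * δk1 / (1 - δk) * L < α * linf (Φᵀ.mulVec r) := by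
    calc Real.sqrt k * δk1 / (1 - δk) * L
        ≤ Real.sqrt k * δk1 / (1 - δk) * linf (Φᵀ.mulVec r) :=
          mul_le_mul_of_nonneg_left hLlinf hc_nonneg
      _ < α * linf (Φᵀ.mulVec r) := by
          exact mul_lt_mul_of_pos_right hαgt hlinf_pos
  linarith
end

section
/- Let Φ ∈ ℝ^{m×N} satisfy the Restricted Isometry Property with constant δ_k for sparsity k, let Γ♯ ⊆ {1,…,N} with 1 ≤ |Γ♯| ≤ k, and let r ∈ ℝ^m lie in the column span of Φ_{Γ♯}. Then ‖Φ_{Γ♯}* r‖_∞ ≥ ((1−δ_k)^{1/2}/√k) · ‖r‖₂. Consequently, for every α̃ with 0 < α̃ ≤ (1−δ_k)^{1/2}/√k, the relaxed weak selection set Ĩ(α̃) = {i ∈ {1,…,N} : |⟨φ_i, r⟩| ≥ α̃‖r‖₂} is nonempty. -/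
open scoped BigOperators
open Matrix

lemma sum_ext {ι : Type*} [Fintype ι] [DecidableEq ι] (Γ : Finset ι) (f : ι → ℝ)
    (h : ∀ i ∉ Γ, f i = 0) : ∑ i, f i = ∑ j : ↥Γ, f j.1 := by
  rw [Finset.sum_coe_sort Γ f]
  exact (Finset.sum_subset (Finset.subset_univ Γ) (fun i _ hi => h i hi)).symm

/-- if `Φ` satisfies RIP with constant `δ` for sparsity `k`,
`1 ≤ |Γ♯| ≤ k`, and `r` lies in the column span of `Φ_{Γ♯}`, then
`‖Φ_{Γ♯}* r‖_∞ ≥ (√(1−δ)/√k)·‖r‖₂`; consequently for every `α̃` with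
`0 < α̃ ≤ √(1−δ)/√k` the relaxed weak selection set `{i : |⟨φ_i, r⟩| ≥ α̃‖r‖₂}`
is nonempty. -/
theorem stmt8 {m N : ℕ} (Φ : Matrix (Fin m) (Fin N) ℝ) (k : ℕ) (δ : ℝ)
    (hRIP : RIP Φ k δ) (Γs : Finset (Fin N)) (hΓ1 : 1 ≤ Γs.card) (hΓ : Γs.card ≤ k)
    (r : Fin m → ℝ) (hr : ∃ w : ↥Γs → ℝ, r = (colSub Φ Γs).mulVec w) :
    linf ((colSub Φ Γs)ᵀ.mulVec r) ≥ Real.sqrt (1 - δ) / Real.sqrt k * l2 r ∧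
    ∀ α : ℝ, 0 < α → α ≤ Real.sqrt (1 - δ) / Real.sqrt k →
      ∃ i : Fin N, α * l2 r ≤ |dot (fun j => Φ j i) r| := by
  obtain ⟨δpos, δlt, hrip⟩ := hRIP
  obtain ⟨w, hw⟩ := hr
  have hne : Γs.Nonempty := Finset.card_pos.mp hΓ1
  haveI hNE : Nonempty ↥Γs := hne.to_subtype
  set v : ↥Γs → ℝ := (colSub Φ Γs)ᵀ.mulVec r with hv
  set L : ℝ := linf v with hLdef
  have hbdd : BddAbove (Set.range fun j => |v j|) := Set.Finite.bddAbove (Set.finite_range _)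
  have hLub : ∀ j, |v j| ≤ L := fun j => le_ciSup hbdd j
  have hL0 : 0 ≤ L := le_trans (abs_nonneg _) (hLub (Classical.arbitrary _))
  -- extended vector
  set x : Fin N → ℝ := fun i => if h : i ∈ Γs then w ⟨i, h⟩ else 0 with hx
  have hxΓ : ∀ j : ↥Γs, x j.1 = w j := by
    intro j; simp [hx, j.2]
  have hΦx : Φ.mulVec x = r := by
    funext i
    rw [hw]
    simp only [Matrix.mulVec, dotProduct, colSub]
    rw [sum_ext Γs (fun a => Φ i a * x a) (fun a ha => by simp [hx, ha])]
    exact Finset.sum_congr rfl fun j _ => by rw [hxΓ j]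
  -- l2 x = l2 w (as sums of squares)
  have hsum_sq : ∑ i, x i ^ 2 = ∑ j, w j ^ 2 := by
    rw [sum_ext Γs (fun a => x a ^ 2) (fun a ha => by simp [hx, ha])]
    exact Finset.sum_congr rfl fun j _ => by rw [hxΓ j]
  have hl2x : l2 x = l2 w := by rw [l2, l2, hsum_sq]
  -- RIP bound
  have hsp : Sparse k x := ⟨Γs, hΓ, fun i hi => by simp [hx, hi]⟩
  have hripx := (hrip x hsp).1
  rw [hΦx, hl2x] at hripx
  -- key identity: ∑ r² = ∑ v·w
  have hdot : ∑ i, r i ^ 2 = ∑ j, v j * w j := by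
    have h1 : ∀ i, r i ^ 2 = ((colSub Φ Γs).mulVec w i) * r i := by
      intro i; rw [← hw]; ring
    rw [Finset.sum_congr rfl fun i _ => h1 i]
    simp only [Matrix.mulVec, dotProduct, Finset.sum_mul]
    rw [Finset.sum_comm]
    refine Finset.sum_congr rfl fun j _ => ?_
    simp only [hv, Matrix.mulVec, dotProduct, Matrix.transpose_apply, Finset.sum_mul]
    refine Finset.sum_congr rfl fun i _ => by ring
  -- bound ∑ v·w ≤ L * ∑ |w|
  have hb1 : ∑ j, v j * w j ≤ L * ∑ j, |w j| := by
    rw [Finset.mul_sum]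
    refine Finset.sum_le_sum fun j _ => ?_
    calc v j * w j ≤ |v j * w j| := le_abs_self _
      _ = |v j| * |w j| := abs_mul _ _
      _ ≤ L * |w j| := mul_le_mul_of_nonneg_right (hLub j) (abs_nonneg _)
  -- Cauchy-Schwarz ℓ1-ℓ2
  have hcard : (Fintype.card ↥Γs : ℝ) = (Γs.card : ℝ) := by
    rw [Fintype.card_coe]
  have hb2 : ∑ j, |w j| ≤ Real.sqrt (Γs.card) * l2 w := by
    have h := sq_sum_le_card_mul_sum_sq (s := (Finset.univ : Finset ↥Γs))
      (f := fun j => |w j|)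
    simp only [Finset.card_univ, sq_abs] at h
    have h' : (∑ j, |w j|) ^ 2 ≤ (Γs.card : ℝ) * ∑ j, w j ^ 2 := by
      rw [← hcard]; exact_mod_cast h
    have hnn : 0 ≤ ∑ j, |w j| := Finset.sum_nonneg fun j _ => abs_nonneg _
    calc ∑ j, |w j| = Real.sqrt ((∑ j, |w j|) ^ 2) := (Real.sqrt_sq hnn).symm
      _ ≤ Real.sqrt ((Γs.card : ℝ) * ∑ j, w j ^ 2) := Real.sqrt_le_sqrt h'
      _ = Real.sqrt (Γs.card) * l2 w := by
          rw [Real.sqrt_mul (by positivity), l2]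
  have hl2r0 : 0 ≤ l2 r := Real.sqrt_nonneg _
  have hl2w0 : 0 ≤ l2 w := Real.sqrt_nonneg _
  have hl2rsq : l2 r ^ 2 = ∑ i, r i ^ 2 := Real.sq_sqrt (by positivity)
  have hs : (0:ℝ) < Real.sqrt (1 - δ) := Real.sqrt_pos.mpr (by linarith)
  have ht : (0:ℝ) < Real.sqrt k := Real.sqrt_pos.mpr (by
    have : (1:ℝ) ≤ (k:ℝ) := by exact_mod_cast le_trans hΓ1 hΓ
    linarith)
  have htΓ : Real.sqrt (Γs.card) ≤ Real.sqrt k := Real.sqrt_le_sqrt (by exact_mod_cast hΓ)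
  -- main chain : l2 r ^ 2 ≤ L * √k * l2 w
  have hmain : l2 r ^ 2 ≤ L * (Real.sqrt k * l2 w) := by
    calc l2 r ^ 2 = ∑ j, v j * w j := by rw [hl2rsq, hdot]
      _ ≤ L * ∑ j, |w j| := hb1
      _ ≤ L * (Real.sqrt (Γs.card) * l2 w) := mul_le_mul_of_nonneg_left hb2 hL0
      _ ≤ L * (Real.sqrt k * l2 w) :=
          mul_le_mul_of_nonneg_left (mul_le_mul_of_nonneg_right htΓ hl2w0) hL0
  -- RIP : √(1-δ) * l2 w ≤ l2 r
  have hrlow : Real.sqrt (1 - δ) * l2 w ≤ l2 r := by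
    have h1 : (Real.sqrt (1 - δ) * l2 w) ^ 2 ≤ l2 r ^ 2 := by
      rw [mul_pow, Real.sq_sqrt (by linarith : (0:ℝ) ≤ 1 - δ)]
      exact hripx
    have h2 := Real.sqrt_le_sqrt h1
    rwa [Real.sqrt_sq (by positivity), Real.sqrt_sq hl2r0] at h2
  -- conclude first part
  have hfirst : Real.sqrt (1 - δ) / Real.sqrt k * l2 r ≤ L := by
    rcases eq_or_lt_of_le hl2r0 with h0 | h0
    · rw [← h0, mul_zero]; exact hL0
    · rw [div_mul_eq_mul_div, div_le_iff₀ ht]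
      have key : Real.sqrt (1 - δ) * l2 r * l2 r ≤ L * Real.sqrt k * l2 r := by
        nlinarith [mul_le_mul_of_nonneg_left hmain hs.le,
          mul_le_mul_of_nonneg_left hrlow (mul_nonneg (mul_nonneg hL0 ht.le) hl2r0)]
      exact le_of_mul_le_mul_right key h0
  refine ⟨hfirst, fun α hα hαle => ?_⟩
  -- the sup is attained
  obtain ⟨j, hj⟩ := Finite.exists_max fun j => |v j|
  refine ⟨j.1, ?_⟩
  have hvj : dot (fun a => Φ a j.1) r = v j := by
    simp only [dot, hv, Matrix.mulVec, dotProduct, Matrix.transpose_apply, colSub]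
  have hLj : L ≤ |v j| := ciSup_le hj
  calc α * l2 r ≤ Real.sqrt (1 - δ) / Real.sqrt k * l2 r :=
        mul_le_mul_of_nonneg_right hαle hl2r0
    _ ≤ L := hfirst
    _ ≤ |v j| := hLj
    _ = |dot (fun a => Φ a j.1) r| := by rw [hvj]
end

section
/- Let Φ ∈ ℝ^{m×N} satisfy the Restricted Isometry Property with constant δ_k for sparsity k. Let Γ♯ ⊆ {1,…,N} with |Γ♯| ≤ k, let Γ ⊆ Γ♯ be nonempty, and let r ∈ ℝ^m be a nonzero vector in the column span of Φ_{Γ♯} such that ‖Φ_Γ* r‖_∞ = ‖Φ* r‖_∞ (i.e., Γ contains an index maximizing |⟨φ_i, r⟩|). Define the gradient pursuit step: d = Φ_Γ* r, a = ⟨r, Φ_Γ d⟩ / ‖Φ_Γ d‖₂², and r' = r − a·Φ_Γ d. Then ‖r'‖₂² ≤ (1 − (1−δ_k)/(k(1+δ_k))) · ‖r‖₂². -/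
open scoped BigOperators
open Matrix

lemma linf_le_l2 {ι : Type*} [Fintype ι] [Nonempty ι] (x : ι → ℝ) : linf x ≤ l2 x := by
  refine ciSup_le fun i => ?_
  rw [← Real.sqrt_sq_eq_abs, l2]
  exact Real.sqrt_le_sqrt (Finset.single_le_sum (f := fun i => x i ^ 2)
    (fun i _ => sq_nonneg _) (Finset.mem_univ i))

/-- Extension of a vector on a subset by zero. -/
def extΓ {N : ℕ} (Γ : Finset (Fin N)) (d : ↥Γ → ℝ) : Fin N → ℝ :=
  fun i => if h : i ∈ Γ then d ⟨i, h⟩ else 0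

lemma ext_sparse {N : ℕ} (Γ : Finset (Fin N)) (d : ↥Γ → ℝ) (k : ℕ) (hk : Γ.card ≤ k) :
    Sparse k (extΓ Γ d) :=
  ⟨Γ, hk, fun i hi => by simp [extΓ, hi]⟩

lemma sum_ext_s9 {N : ℕ} (Γ : Finset (Fin N)) (d : ↥Γ → ℝ) (f : Fin N → ℝ → ℝ)
    (hf : ∀ i, f i 0 = 0) :
    ∑ i, f i (extΓ Γ d i) = ∑ j : ↥Γ, f j.1 (d j) := by
  have h1 : ∀ j : ↥Γ, d j = extΓ Γ d j.1 := fun j => by simp [extΓ, j.2]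
  calc ∑ i, f i (extΓ Γ d i) = ∑ i ∈ Γ, f i (extΓ Γ d i) :=
        (Finset.sum_subset (Finset.subset_univ Γ) (fun i _ hi => by simp [extΓ, hi, hf])).symm
    _ = ∑ j : ↥Γ, f j.1 (extΓ Γ d j.1) := (Finset.sum_coe_sort Γ _).symm
    _ = ∑ j : ↥Γ, f j.1 (d j) := Finset.sum_congr rfl fun j _ => by rw [← h1 j]

lemma mulVec_ext {m N : ℕ} (Φ : Matrix (Fin m) (Fin N) ℝ) (Γ : Finset (Fin N))
    (d : ↥Γ → ℝ) : Φ.mulVec (extΓ Γ d) = (colSub Φ Γ).mulVec d := by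
  funext i
  show ∑ j, Φ i j * extΓ Γ d j = ∑ j : ↥Γ, Φ i j.1 * d j
  exact sum_ext_s9 Γ d (fun j t => Φ i j * t) (fun j => mul_zero _)

lemma l2_sq_ext {N : ℕ} (Γ : Finset (Fin N)) (d : ↥Γ → ℝ) :
    l2 (extΓ Γ d) ^ 2 = l2 d ^ 2 := by
  rw [l2_sq, l2_sq]
  exact sum_ext_s9 Γ d (fun j t => t ^ 2) (fun j => by norm_num)

set_option maxHeartbeats 1000000 in
/-- one gradient pursuit step reduces the residual energy by the factor
`1 − (1−δ)/(k(1+δ))`, provided the current support `Γ` is contained in the true support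
`Γ♯` (with `|Γ♯| ≤ k`), the residual `r ≠ 0` lies in the column span of `Φ_{Γ♯}`, and `Γ`
contains an index maximizing `|⟨φ_i, r⟩|`. -/
theorem stmt9 {m N : ℕ} (Φ : Matrix (Fin m) (Fin N) ℝ) (k : ℕ) (δ : ℝ)
    (hRIP : RIP Φ k δ) (Γs Γ : Finset (Fin N)) (hΓs : Γs.card ≤ k)
    (hsub : Γ ⊆ Γs) (hne : Γ.Nonempty)
    (r : Fin m → ℝ) (hr0 : r ≠ 0)
    (hr : ∃ w : ↥Γs → ℝ, r = (colSub Φ Γs).mulVec w)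
    (hmax : linf ((colSub Φ Γ)ᵀ.mulVec r) = linf (Φᵀ.mulVec r))
    (d : ↥Γ → ℝ) (hd : d = (colSub Φ Γ)ᵀ.mulVec r)
    (a : ℝ) (ha : a = dot r ((colSub Φ Γ).mulVec d) / l2 ((colSub Φ Γ).mulVec d) ^ 2)
    (r' : Fin m → ℝ) (hr' : r' = r - a • (colSub Φ Γ).mulVec d) :
    l2 r' ^ 2 ≤ (1 - (1 - δ) / (k * (1 + δ))) * l2 r ^ 2 := by
  obtain ⟨hδ0, hδ1, hrip⟩ := hRIP
  obtain ⟨w, hw⟩ := hr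
  haveI : Nonempty ↥Γ := ⟨⟨hne.choose, hne.choose_spec⟩⟩
  haveI : Nonempty ↥Γs := ⟨⟨hne.choose, hsub hne.choose_spec⟩⟩
  have hk1 : (1 : ℝ) ≤ k := by
    have hmem := hsub hne.choose_spec
    have h1 : 1 ≤ Γs.card := Finset.card_pos.mpr ⟨_, hmem⟩
    exact_mod_cast le_trans h1 hΓs
  set v : Fin m → ℝ := (colSub Φ Γ).mulVec d with hv
  set R := ∑ i, r i ^ 2 with hR
  set D := ∑ j, d j ^ 2 with hD
  set V := ∑ i, v i ^ 2 with hV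
  have hDnn : 0 ≤ D := Finset.sum_nonneg fun j _ => sq_nonneg _
  -- R > 0
  have hRpos : 0 < R := by
    rcases lt_or_eq_of_le (Finset.sum_nonneg (fun i (_ : i ∈ Finset.univ) => sq_nonneg (r i))) with h | h
    · exact h
    · exfalso; apply hr0; funext i
      have h2 := (Finset.sum_eq_zero_iff_of_nonneg
        (fun i (_ : i ∈ Finset.univ) => sq_nonneg (r i))).mp h.symm i (Finset.mem_univ i)
      exact pow_eq_zero_iff (n := 2) (by norm_num) |>.mp h2
  -- dot r v = D
  have hdot : dot r v = D := by
    show r ⬝ᵥ (colSub Φ Γ).mulVec d = D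
    rw [Matrix.dotProduct_mulVec, ← Matrix.mulVec_transpose, ← hd]
    exact Finset.sum_congr rfl fun j _ => (pow_two (d j)).symm
  -- RIP bounds for d-extension
  have hdext := hrip (extΓ Γ d) (ext_sparse Γ d k (le_trans (Finset.card_le_card hsub) hΓs))
  rw [mulVec_ext, l2_sq_ext, ← hv, l2_sq, l2_sq, ← hD, ← hV] at hdext
  -- RIP bounds for w-extension
  have hwext := hrip (extΓ Γs w) (ext_sparse Γs w k hΓs)
  rw [mulVec_ext, l2_sq_ext, ← hw, l2_sq, l2_sq, ← hR] at hwext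
  set W := ∑ j, w j ^ 2 with hW
  have hWnn : 0 ≤ W := Finset.sum_nonneg fun j _ => sq_nonneg _
  -- s = Φ_Γs* r, its norm² =: S ≥ (1-δ) R
  set s : ↥Γs → ℝ := (colSub Φ Γs)ᵀ.mulVec r with hs
  set S := ∑ j, s j ^ 2 with hS
  have hSnn : 0 ≤ S := Finset.sum_nonneg fun j _ => sq_nonneg _
  have hRsw : R = dot s w := by
    have h3 : R = dot r r := Finset.sum_congr rfl fun i _ => pow_two (r i)
    rw [h3]
    show r ⬝ᵥ r = s ⬝ᵥ w
    nth_rewrite 2 [hw]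
    rw [Matrix.dotProduct_mulVec, ← Matrix.mulVec_transpose, ← hs]
  have hcs : R ^ 2 ≤ S * W := by
    rw [hRsw]
    exact Finset.sum_mul_sq_le_sq_mul_sq Finset.univ s w
  have hSR : (1 - δ) * R ≤ S := by
    nlinarith [hwext.1, hcs, hRpos, hSnn, hWnn,
      mul_le_mul_of_nonneg_left hwext.1 hSnn]
  -- S ≤ k * D
  have hlinf_le : ∀ j : ↥Γs, |s j| ≤ l2 d := by
    intro j
    calc |s j| = |(Φᵀ.mulVec r) j.1| := rfl
    _ ≤ linf (Φᵀ.mulVec r) := abs_le_linf _ _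
    _ = linf ((colSub Φ Γ)ᵀ.mulVec r) := hmax.symm
    _ = linf d := by rw [hd]
    _ ≤ l2 d := linf_le_l2 d
  have hSkD : S ≤ k * D := by
    have hld : l2 d ^ 2 = D := l2_sq d
    have h4 : S ≤ ∑ _j : ↥Γs, l2 d ^ 2 := by
      refine Finset.sum_le_sum fun j _ => ?_
      have := hlinf_le j
      nlinarith [abs_nonneg (s j), sq_abs (s j)]
    rw [Finset.sum_const, Finset.card_univ, Fintype.card_coe, nsmul_eq_mul, hld] at h4
    refine le_trans h4 (mul_le_mul_of_nonneg_right ?_ hDnn)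
    exact_mod_cast hΓs
  -- D > 0, V > 0
  have hDpos : 0 < D := by
    have h5 : (1 - δ) * R ≤ (k : ℝ) * D := le_trans hSR hSkD
    nlinarith [hRpos]
  have hVpos : 0 < V := by nlinarith [hdext.1]
  -- energy identity
  have hA : a = D / V := by rw [ha, hdot, l2_sq, ← hV]
  have henergy : l2 r' ^ 2 = R - D ^ 2 / V := by
    rw [hr', l2_sq]
    have expand : ∀ i, ((r - a • v) i) ^ 2 =
        r i ^ 2 - 2 * a * (r i * v i) + a ^ 2 * v i ^ 2 := fun i => by
      simp only [Pi.sub_apply, Pi.smul_apply, smul_eq_mul]; ring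
    rw [Finset.sum_congr rfl fun i _ => expand i]
    rw [Finset.sum_add_distrib, Finset.sum_sub_distrib, ← Finset.mul_sum, ← Finset.mul_sum]
    have hsum : ∑ i, r i * v i = D := hdot
    rw [hsum, hA, ← hR, ← hV]
    field_simp
    ring
  rw [henergy, l2_sq, ← hR]
  -- final inequality
  have hkpos : (0:ℝ) < k * (1 + δ) := by positivity
  have key : (1 - δ) / (↑k * (1 + δ)) * R ≤ D ^ 2 / V := by
    rw [div_mul_eq_mul_div, div_le_div_iff₀ hkpos hVpos]
    have h1 : V ≤ (1 + δ) * D := hdext.2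
    have h2 : (1 - δ) * R ≤ k * D := le_trans hSR hSkD
    nlinarith [mul_le_mul_of_nonneg_left h1 (mul_nonneg (by linarith : (0:ℝ) ≤ 1 - δ) hRpos.le),
      mul_le_mul_of_nonneg_right h2 (mul_nonneg (by linarith : (0:ℝ) ≤ 1 + δ) hDpos.le)]
  nlinarith [key]
end

section
/- Let Φ ∈ ℝ^{m×N} satisfy the Restricted Isometry Property with constant δ_k for sparsity k, let Γ ⊆ {1,…,N} with |Γ| ≤ k, and let r ∈ ℝ^m be such that Φ_Γ* r ≠ 0. With d = Φ_Γ* r, a = ⟨r, Φ_Γ d⟩/‖Φ_Γ d‖₂², and r' = r − a·Φ_Γ d, one has ‖r'‖₂² = ‖r‖₂² − |⟨r, Φ_Γ d⟩|²/‖Φ_Γ d‖₂², and moreover |⟨r, Φ_Γ d⟩|²/‖Φ_Γ d‖₂² ≥ ‖Φ_Γ* r‖₂²/(1+δ_k), so that ‖r'‖₂² ≤ ‖r‖₂² − ‖Φ_Γ* r‖₂²/(1+δ_k). -/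
open scoped BigOperators
open Matrix

lemma dot_mulVec_adj {μ ν : Type*} [Fintype μ] [Fintype ν]
    (M : Matrix μ ν ℝ) (r : μ → ℝ) (d : ν → ℝ) :
    dot r (M.mulVec d) = dot (Mᵀ.mulVec r) d := by
  unfold dot Matrix.mulVec dotProduct
  simp only [Matrix.transpose_apply, Finset.mul_sum, Finset.sum_mul]
  rw [Finset.sum_comm]
  exact Finset.sum_congr rfl fun j _ => Finset.sum_congr rfl fun i _ => by ring

/-- exact energy identity and lower bound for one gradient pursuit step:
`‖r'‖₂² = ‖r‖₂² − |⟨r, Φ_Γ d⟩|²/‖Φ_Γ d‖₂²`, the subtracted quantity is at least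
`‖Φ_Γ* r‖₂²/(1+δ)`, and hence `‖r'‖₂² ≤ ‖r‖₂² − ‖Φ_Γ* r‖₂²/(1+δ)`. -/
theorem stmt10 {m N : ℕ} (Φ : Matrix (Fin m) (Fin N) ℝ) (k : ℕ) (δ : ℝ)
    (hRIP : RIP Φ k δ) (Γ : Finset (Fin N)) (hΓ : Γ.card ≤ k)
    (r : Fin m → ℝ) (hne : (colSub Φ Γ)ᵀ.mulVec r ≠ 0)
    (d : ↥Γ → ℝ) (hd : d = (colSub Φ Γ)ᵀ.mulVec r)
    (a : ℝ) (ha : a = dot r ((colSub Φ Γ).mulVec d) / l2 ((colSub Φ Γ).mulVec d) ^ 2)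
    (r' : Fin m → ℝ) (hr' : r' = r - a • (colSub Φ Γ).mulVec d) :
    l2 r' ^ 2 =
      l2 r ^ 2 - |dot r ((colSub Φ Γ).mulVec d)| ^ 2 / l2 ((colSub Φ Γ).mulVec d) ^ 2 ∧
    |dot r ((colSub Φ Γ).mulVec d)| ^ 2 / l2 ((colSub Φ Γ).mulVec d) ^ 2 ≥
      l2 ((colSub Φ Γ)ᵀ.mulVec r) ^ 2 / (1 + δ) ∧
    l2 r' ^ 2 ≤ l2 r ^ 2 - l2 ((colSub Φ Γ)ᵀ.mulVec r) ^ 2 / (1 + δ) := by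
  obtain ⟨hδ0, hδ1, hrip⟩ := hRIP
  set v := (colSub Φ Γ).mulVec d with hv
  set S := ∑ i, d i ^ 2 with hS
  set V := ∑ i, v i ^ 2 with hV
  set I := dot r v with hI
  have hl2d : l2 d ^ 2 = S := l2_sq d
  have hl2v : l2 v ^ 2 = V := l2_sq v
  -- inner product equals S
  have hIS : I = S := by
    rw [hI, hv, dot_mulVec_adj, ← hd]
    unfold dot
    exact Finset.sum_congr rfl fun i _ => by ring
  -- S > 0
  have hdne : d ≠ 0 := by rw [hd]; exact hne
  have hSpos : 0 < S := by
    obtain ⟨i, hi⟩ := Function.ne_iff.mp hdne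
    have hi' : d i ≠ 0 := hi
    have : (0:ℝ) < d i ^ 2 := by positivity
    exact Finset.sum_pos' (fun j _ => sq_nonneg _) ⟨i, Finset.mem_univ i, this⟩
  -- V > 0
  have hVnonneg : 0 ≤ V := Finset.sum_nonneg fun _ _ => sq_nonneg _
  have hVpos : 0 < V := by
    rcases lt_or_eq_of_le hVnonneg with h | h
    · exact h
    · exfalso
      have hz : ∀ i ∈ Finset.univ, v i ^ 2 = 0 :=
        (Finset.sum_eq_zero_iff_of_nonneg fun _ _ => sq_nonneg _).mp h.symm
      have : I = 0 := by
        rw [hI]; unfold dot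
        refine Finset.sum_eq_zero fun i _ => ?_
        have := pow_eq_zero_iff (n := 2) (by norm_num) |>.mp (hz i (Finset.mem_univ i))
        rw [this, mul_zero]
      linarith [hIS ▸ this ▸ hSpos]
  -- RIP bound: V ≤ (1+δ) * S
  have hVle : V ≤ (1 + δ) * S := by
    set x : Fin N → ℝ := fun i => if h : i ∈ Γ then d ⟨i, h⟩ else 0 with hx
    have hsp : Sparse k x := by
      refine ⟨Γ, hΓ, fun i hi => ?_⟩
      simp [hx, hi]
    have hmv : Φ.mulVec x = v := by
      funext i
      show ∑ j, Φ i j * x j = ∑ j : ↥Γ, colSub Φ Γ i j * d j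
      calc ∑ j, Φ i j * x j
          = ∑ j ∈ Γ, Φ i j * x j :=
            (Finset.sum_subset Γ.subset_univ (fun j _ hj => by simp [hx, hj])).symm
        _ = ∑ j : ↥Γ, Φ i (j : Fin N) * x (j : Fin N) :=
            (Finset.sum_coe_sort Γ (fun j => Φ i j * x j)).symm
        _ = ∑ j : ↥Γ, colSub Φ Γ i j * d j :=
            Finset.sum_congr rfl fun j _ => by simp [hx, colSub, j.2]
    have hxS : l2 x ^ 2 = S := by
      rw [l2_sq, hS]
      calc ∑ j, x j ^ 2
          = ∑ j ∈ Γ, x j ^ 2 :=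
            (Finset.sum_subset Γ.subset_univ (fun j _ hj => by simp [hx, hj])).symm
        _ = ∑ j : ↥Γ, x (j : Fin N) ^ 2 :=
            (Finset.sum_coe_sort Γ (fun j => x j ^ 2)).symm
        _ = ∑ j : ↥Γ, d j ^ 2 :=
            Finset.sum_congr rfl fun j _ => by simp [hx, j.2]
    have := (hrip x hsp).2
    rwa [hmv, hxS, hl2v] at this
  -- energy identity
  have henergy : l2 r' ^ 2 = l2 r ^ 2 - I ^ 2 / V := by
    rw [l2_sq, l2_sq]
    have hterm : ∀ i, r' i ^ 2 = r i ^ 2 - 2 * a * (r i * v i) + a ^ 2 * v i ^ 2 := by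
      intro i
      rw [hr']
      simp only [Pi.sub_apply, Pi.smul_apply, smul_eq_mul]
      ring
    rw [Finset.sum_congr rfl fun i _ => hterm i]
    rw [Finset.sum_add_distrib, Finset.sum_sub_distrib, ← Finset.mul_sum, ← Finset.mul_sum]
    have hIsum : ∑ i, r i * v i = I := rfl
    rw [hIsum, ha, hl2v, ← hV]
    field_simp
    ring
  have hone : l2 r' ^ 2 = l2 r ^ 2 - |I| ^ 2 / V := by rw [henergy, sq_abs]
  have habs : |dot r ((colSub Φ Γ).mulVec d)| ^ 2 / l2 ((colSub Φ Γ).mulVec d) ^ 2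
      = |I| ^ 2 / V := by rw [← hv, ← hI, hl2v]
  have hl2dr : l2 ((colSub Φ Γ)ᵀ.mulVec r) ^ 2 = S := by rw [← hd, hl2d]
  have htwo : |I| ^ 2 / V ≥ S / (1 + δ) := by
    rw [sq_abs, hIS]
    rw [ge_iff_le, div_le_div_iff₀ (by linarith) hVpos]
    nlinarith
  refine ⟨by rw [habs, hone], ?_, ?_⟩
  · rw [habs, hl2dr]; exact htwo
  · rw [hone, hl2dr]
    have := htwo
    have hVle' : S / (1 + δ) ≤ |I| ^ 2 / V := htwo
    linarith
end

section
/- Let Φ ∈ ℝ^{m×N} satisfy the Restricted Isometry Property with constant δ_k for sparsity k, let Γ♯ ⊆ {1,…,N} be nonempty with |Γ♯| ≤ k, and let r ∈ ℝ^m be a nonzero vector in the column span of Φ_{Γ♯}. Apply one gradient pursuit step on the full support Γ = Γ♯: with d = Φ_{Γ♯}* r, a = ⟨r, Φ_{Γ♯} d⟩/‖Φ_{Γ♯} d‖₂², and r' = r − a·Φ_{Γ♯} d, one has ‖r'‖₂² ≤ (2δ_k/(1+δ_k)) · ‖r‖₂². -/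
open scoped BigOperators
open Matrix

lemma dot_comm {ι : Type*} [Fintype ι] (x y : ι → ℝ) : dot x y = dot y x := by
  simp [dot, mul_comm]

lemma dot_mulVec_left {μ ν : Type*} [Fintype μ] [Fintype ν]
    (M : Matrix μ ν ℝ) (v : ν → ℝ) (y : μ → ℝ) :
    dot (M.mulVec v) y = dot v (Mᵀ.mulVec y) := by
  simp only [dot, Matrix.mulVec, dotProduct, Matrix.transpose_apply,
    Finset.sum_mul, Finset.mul_sum]
  rw [Finset.sum_comm]
  exact Finset.sum_congr rfl fun j _ => Finset.sum_congr rfl fun i _ => by ring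

lemma sum_extend {ι : Type*} [Fintype ι] [DecidableEq ι] (Γ : Finset ι) (g : ↥Γ → ℝ) :
    (∑ j, if h : j ∈ Γ then g ⟨j, h⟩ else 0) = ∑ j : ↥Γ, g j := by
  calc (∑ j : ι, if h : j ∈ Γ then g ⟨j, h⟩ else 0)
      = ∑ j ∈ Γ, (if h : j ∈ Γ then g ⟨j, h⟩ else 0) :=
        (Finset.sum_subset (Finset.subset_univ _) (fun j _ hj => dif_neg hj)).symm
    _ = ∑ j : ↥Γ, (if h : (j : ι) ∈ Γ then g ⟨j, h⟩ else 0) :=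
        (Finset.sum_coe_sort _ _).symm
    _ = ∑ j : ↥Γ, g j :=
        Finset.sum_congr rfl (fun j _ => by rw [dif_pos j.2, Subtype.coe_eta])

/-- Extend a vector on a subtype by zeros, preserving `Φ`-image and squared sums. -/
lemma ext_spec {m N : ℕ} (Φ : Matrix (Fin m) (Fin N) ℝ) (Γ : Finset (Fin N)) (v : ↥Γ → ℝ) :
    ∃ x : Fin N → ℝ, (∀ i ∉ Γ, x i = 0) ∧
      Φ.mulVec x = (colSub Φ Γ).mulVec v ∧ (∑ i, x i ^ 2) = ∑ j, v j ^ 2 := by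
  refine ⟨fun i => if h : i ∈ Γ then v ⟨i, h⟩ else 0, fun i hi => dif_neg hi, ?_, ?_⟩
  · funext i
    show (∑ j, Φ i j * _) = ∑ j : ↥Γ, colSub Φ Γ i j * v j
    calc (∑ j, Φ i j * if h : j ∈ Γ then v ⟨j, h⟩ else 0)
        = ∑ j, if h : j ∈ Γ then Φ i j * v ⟨j, h⟩ else 0 :=
          Finset.sum_congr rfl (fun j _ => by rw [mul_dite, mul_zero])
      _ = ∑ j : ↥Γ, Φ i j.1 * v j := sum_extend Γ (fun j => Φ i j.1 * v j)
      _ = ∑ j : ↥Γ, colSub Φ Γ i j * v j := rfl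
  · show (∑ j, (if h : j ∈ Γ then v ⟨j, h⟩ else 0) ^ 2) = _
    calc (∑ j, (if h : j ∈ Γ then v ⟨j, h⟩ else 0) ^ 2)
        = ∑ j, if h : j ∈ Γ then v ⟨j, h⟩ ^ 2 else 0 :=
          Finset.sum_congr rfl (fun j _ => by rw [apply_dite (· ^ 2)]; simp)
      _ = ∑ j : ↥Γ, v j ^ 2 := sum_extend Γ (fun j => v j ^ 2)

/-- RIP restated on the column submatrix. -/
lemma rip_sub {m N : ℕ} {Φ : Matrix (Fin m) (Fin N) ℝ} {k : ℕ} {δ : ℝ}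
    (hRIP : RIP Φ k δ) (Γ : Finset (Fin N)) (hΓ : Γ.card ≤ k) (v : ↥Γ → ℝ) :
    (1 - δ) * (∑ j, v j ^ 2) ≤ (∑ i, ((colSub Φ Γ).mulVec v) i ^ 2) ∧
      (∑ i, ((colSub Φ Γ).mulVec v) i ^ 2) ≤ (1 + δ) * (∑ j, v j ^ 2) := by
  obtain ⟨x, hx0, hxv, hxs⟩ := ext_spec Φ Γ v
  have hs : Sparse k x := ⟨Γ, hΓ, hx0⟩
  have := hRIP.2.2 x hs
  rw [l2_sq, l2_sq, hxv, hxs] at this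
  exact this

set_option maxHeartbeats 1000000 in
/-- one gradient pursuit step on the full support `Γ♯` (with `|Γ♯| ≤ k`,
`Γ♯` nonempty, and `r ≠ 0` in the column span of `Φ_{Γ♯}`) reduces the residual energy by
the factor `2δ/(1+δ)`. -/
theorem stmt11 {m N : ℕ} (Φ : Matrix (Fin m) (Fin N) ℝ) (k : ℕ) (δ : ℝ)
    (hRIP : RIP Φ k δ) (Γs : Finset (Fin N)) (hne : Γs.Nonempty) (hΓs : Γs.card ≤ k)
    (r : Fin m → ℝ) (hr0 : r ≠ 0)
    (hr : ∃ w : ↥Γs → ℝ, r = (colSub Φ Γs).mulVec w)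
    (d : ↥Γs → ℝ) (hd : d = (colSub Φ Γs)ᵀ.mulVec r)
    (a : ℝ) (ha : a = dot r ((colSub Φ Γs).mulVec d) / l2 ((colSub Φ Γs).mulVec d) ^ 2)
    (r' : Fin m → ℝ) (hr' : r' = r - a • (colSub Φ Γs).mulVec d) :
    l2 r' ^ 2 ≤ 2 * δ / (1 + δ) * l2 r ^ 2 := by
  obtain ⟨δpos, δlt1, hRall⟩ := hRIP
  obtain ⟨w, hw⟩ := hr
  set M := colSub Φ Γs with hM
  set u := M.mulVec d with hu
  set R : ℝ := ∑ i, r i ^ 2 with hR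
  set D : ℝ := ∑ j, d j ^ 2 with hD
  set U : ℝ := ∑ i, u i ^ 2 with hU
  set W : ℝ := ∑ j, w j ^ 2 with hW
  -- R > 0
  have hRpos : 0 < R := by
    have h1 : ∃ i, r i ≠ 0 := by
      by_contra h
      push_neg at h
      exact hr0 (funext h)
    obtain ⟨i0, hi0⟩ := h1
    exact Finset.sum_pos' (fun i _ => sq_nonneg _)
      ⟨i0, Finset.mem_univ _, by positivity⟩
  -- dot r u = D
  have hru : dot r u = D := by
    rw [dot_comm, hu, dot_mulVec_left, ← hd]
    simp [dot, hD, sq]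
  -- R = dot d w
  have h2 : dot (M.mulVec w) r = dot w (Mᵀ.mulVec r) := dot_mulVec_left M w r
  rw [← hd] at h2
  have hRdw : R = dot d w := by
    rw [dot_comm, ← h2, ← hw]
    simp [dot, hR, sq]
  -- Cauchy–Schwarz: R^2 ≤ D * W
  have hCS : R ^ 2 ≤ D * W := by
    rw [hRdw]
    exact Finset.sum_mul_sq_le_sq_mul_sq Finset.univ d w
  -- RIP on w : (1-δ) W ≤ R
  have hripw := (rip_sub ⟨δpos, δlt1, hRall⟩ Γs hΓs w).1
  have hWR : (1 - δ) * W ≤ R := by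
    rw [hR, hw]; exact hripw
  -- RIP on d
  have hripd := rip_sub ⟨δpos, δlt1, hRall⟩ Γs hΓs d
  have hDU : (1 - δ) * D ≤ U := hripd.1
  have hUD : U ≤ (1 + δ) * D := hripd.2
  have hWnn : 0 ≤ W := Finset.sum_nonneg fun _ _ => sq_nonneg _
  have hDnn : 0 ≤ D := Finset.sum_nonneg fun _ _ => sq_nonneg _
  -- D ≥ (1-δ) R
  have hDge : (1 - δ) * R ≤ D := by
    nlinarith [hCS, hWR, hRpos, hDnn, hWnn]
  have hDpos : 0 < D := lt_of_lt_of_le (by nlinarith) hDge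
  have hUpos : 0 < U := lt_of_lt_of_le (by nlinarith) hDU
  -- a = D / U
  have haDU : a = D / U := by rw [ha, hru, l2_sq]
  -- l2 r' ^ 2 = R - D^2 / U
  have hr'sq : l2 r' ^ 2 = R - D ^ 2 / U := by
    rw [l2_sq, hr']
    have h1 : ∀ i, ((r - a • u) i) ^ 2 = r i ^ 2 - 2 * a * (r i * u i) + a ^ 2 * u i ^ 2 :=
      fun i => by simp [Pi.sub_apply, Pi.smul_apply, smul_eq_mul]; ring
    calc (∑ i, ((r - a • u) i) ^ 2)
        = ∑ i, (r i ^ 2 - 2 * a * (r i * u i) + a ^ 2 * u i ^ 2) :=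
          Finset.sum_congr rfl fun i _ => h1 i
      _ = R - 2 * a * dot r u + a ^ 2 * U := by
          rw [Finset.sum_add_distrib, Finset.sum_sub_distrib, ← Finset.mul_sum,
            ← Finset.mul_sum]
          rfl
      _ = R - D ^ 2 / U := by
          rw [hru, haDU]
          field_simp
          ring
  rw [hr'sq, l2_sq r, ← hR]
  -- final inequality
  clear_value M u R D U W
  set E : ℝ := D ^ 2 / U with hE
  clear_value E
  have hEU : E * U = D ^ 2 := by
    rw [hE]; exact div_mul_cancel₀ _ (ne_of_gt hUpos)
  have hEnn : 0 ≤ E := hE ▸ div_nonneg (sq_nonneg _) (le_of_lt hUpos)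
  have h1δ : (0 : ℝ) < 1 + δ := by linarith
  have h9 : D ≤ E * (1 + δ) := by
    have h10 : E * U ≤ E * ((1 + δ) * D) := mul_le_mul_of_nonneg_left hUD hEnn
    rw [hEU] at h10
    exact le_of_mul_le_mul_right (by nlinarith : D * D ≤ (E * (1 + δ)) * D) hDpos
  rw [div_mul_eq_mul_div, le_div_iff₀ h1δ]
  nlinarith [hDge, h9]
end

section
/- Let Φ ∈ ℝ^{m×N} satisfy the Restricted Isometry Property with constant δ_k for sparsity k, let I ⊆ {1,…,N} with |I| ≤ k, and let r ∈ ℝ^m. Then ‖r − Φ_I Φ_I* r‖₂² ≤ ‖r‖₂² − (1−δ_k)·‖Φ_I* r‖₂². -/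
open scoped BigOperators
open Matrix

/-- if `Φ` satisfies RIP with constant `δ` for sparsity `k`, `|I| ≤ k`, and
`r ∈ ℝ^m`, then `‖r − Φ_I Φ_I* r‖₂² ≤ ‖r‖₂² − (1−δ)‖Φ_I* r‖₂²`. -/
theorem stmt13 {m N : ℕ} (Φ : Matrix (Fin m) (Fin N) ℝ) (k : ℕ) (δ : ℝ)
    (hRIP : RIP Φ k δ) (I : Finset (Fin N)) (hI : I.card ≤ k) (r : Fin m → ℝ) :
    l2 (r - (colSub Φ I).mulVec ((colSub Φ I)ᵀ.mulVec r)) ^ 2 ≤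
      l2 r ^ 2 - (1 - δ) * l2 ((colSub Φ I)ᵀ.mulVec r) ^ 2 := by
  set x : ↥I → ℝ := (colSub Φ I)ᵀ.mulVec r with hx
  set v : Fin m → ℝ := (colSub Φ I).mulVec x with hv
  -- extension of x to Fin N
  set y : Fin N → ℝ := fun i => if h : i ∈ I then x ⟨i, h⟩ else 0 with hy
  have hsp : Sparse k y := ⟨I, hI, fun i hi => by simp [hy, hi]⟩
  have hΦy : Φ.mulVec y = v := by
    funext i
    simp only [hv, Matrix.mulVec, dotProduct]
    rw [← Finset.sum_subset (Finset.subset_univ I)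
      (by intro j _ hj; simp [hy, hj])]
    rw [← Finset.sum_attach I (fun j => Φ i j * y j)]
    apply Finset.sum_congr rfl
    intro j _
    simp [hy, j.2, colSub]
  have hl2y : l2 y ^ 2 = l2 x ^ 2 := by
    rw [l2_sq, l2_sq]
    rw [← Finset.sum_subset (Finset.subset_univ I)
      (by intro j _ hj; simp [hy, hj])]
    rw [← Finset.sum_attach I (fun j => y j ^ 2)]
    apply Finset.sum_congr rfl
    intro j _
    simp [hy, j.2]
  have hub : l2 v ^ 2 ≤ (1 + δ) * l2 x ^ 2 := by
    have := (hRIP.2.2 y hsp).2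
    rwa [hΦy, hl2y] at this
  -- inner product identity : ∑ i, r i * v i = ∑ j, x j ^ 2
  have hdot : ∑ i, r i * v i = ∑ j, x j ^ 2 := by
    simp only [hv, Matrix.mulVec, dotProduct, Finset.mul_sum]
    rw [Finset.sum_comm]
    apply Finset.sum_congr rfl
    intro j _
    have : x j = ∑ i, Φ i j.1 * r i := by
      simp [hx, Matrix.mulVec, dotProduct, Matrix.transpose, colSub, mul_comm]
    rw [this]
    rw [pow_two, Finset.sum_mul]
    apply Finset.sum_congr rfl
    intro i _
    simp [colSub]
    ring
  have hexp : l2 (r - v) ^ 2 = l2 r ^ 2 - 2 * (∑ j, x j ^ 2) + l2 v ^ 2 := by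
    rw [l2_sq, l2_sq, l2_sq, ← hdot]
    rw [Finset.mul_sum, ← Finset.sum_sub_distrib, ← Finset.sum_add_distrib]
    apply Finset.sum_congr rfl
    intro i _
    simp only [Pi.sub_apply]
    ring
  rw [hexp]
  have hxs : l2 x ^ 2 = ∑ j, x j ^ 2 := l2_sq x
  nlinarith [hub, hxs]
end
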